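/- arXiv:1809.09271 — 3 statements merged into one kernel-verified Lean document; each statement's English description precedes it below -/
import Mathlib

section
/- Let (a₁, …, a_m) be a composition of n. If more than two of the aᵢ are odd, then the meander of the seaweed a₁|…|a_m over n has at least two path components; hence its index is strictly positive and the seaweed is not Frobenius. -/
/-- Partial sum of the first `i` parts of a composition. -/
def psum (a : List ℕ) (i : ℕ) : ℕ := (a.take i).sum

/-- Two (1-indexed) vertices are joined by an arc of the composition `a`
if they lie in the same block and are symmetric within that block. -/
def topAdj (a : List ℕ) (j k : ℕ) : Prop :=
  j ≠ k ∧ ∃ i < a.length, psum a i < j ∧ j ≤ psum a (i+1) ∧ psum a i < k ∧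
    k ≤ psum a (i+1) ∧ j + k = psum a i + psum a (i+1) + 1

theorem topAdj_symm (a : List ℕ) {j k : ℕ} (h : topAdj a j k) : topAdj a k j := by
  obtain ⟨hne, i, hi, h1, h2, h3, h4, h5⟩ := h
  exact ⟨hne.symm, i, hi, h3, h4, h1, h2, by omega⟩

/-- The meander of the pair of compositions `(a, b)` of `n`, as a graph on `Fin n`
(vertex `v` represents the 1-indexed vertex `v+1`). -/
def meander (n : ℕ) (a b : List ℕ) : SimpleGraph (Fin n) where
  Adj x y := topAdj a (x.1 + 1) (y.1 + 1) ∨ topAdj b (x.1 + 1) (y.1 + 1)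
  symm := ⟨fun _ _ h => h.elim (fun h => Or.inl (topAdj_symm _ h)) (fun h => Or.inr (topAdj_symm _ h))⟩
  loopless := ⟨fun x h => by rcases h with h | h <;> exact h.1 rfl⟩

/-- Degree of a vertex (cardinality of its neighbor set). -/
noncomputable def deg {n : ℕ} (G : SimpleGraph (Fin n)) (v : Fin n) : ℕ := {w | G.Adj v w}.ncard

/-- A connected component is a cycle iff every vertex in it has degree 2. -/
def IsCycleComp {n : ℕ} (G : SimpleGraph (Fin n)) (c : G.ConnectedComponent) : Prop :=
  ∀ v ∈ c.supp, deg G v = 2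

/-- Number of cycle components. -/
noncomputable def numCycles {n : ℕ} (G : SimpleGraph (Fin n)) : ℕ :=
  {c : G.ConnectedComponent | IsCycleComp G c}.ncard

/-- Number of path components (components of a meander which are not cycles are paths). -/
noncomputable def numPaths {n : ℕ} (G : SimpleGraph (Fin n)) : ℕ :=
  {c : G.ConnectedComponent | ¬ IsCycleComp G c}.ncard

/-- The index `2C + P - 1` of a meander. -/
noncomputable def mIndex {n : ℕ} (G : SimpleGraph (Fin n)) : ℤ :=
  2 * numCycles G + numPaths G - 1

/-!
Each vertex of a meander has at most one top and one bottom partner, so all degrees are at most 2.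
A spanning tree of a connected finite graph has `|V| - 1` edges, so by the handshake lemma
`∑ (2 - deg v) ≤ 2`; hence a component of maximal degree 2 contains at most two vertices of
degree `≤ 1`, and such a component is not a cycle. The centre of an odd top block has no top
partner, so the centres of three odd blocks are three vertices of degree `≤ 1`, which must lie in
at least two path components.
-/

open Finset

namespace SimpleGraph

variable {V : Type*} [Fintype V] {G : SimpleGraph V} [DecidableRel G.Adj]

lemma Connected.two_mul_card_le_sum_degree_add_two (h : G.Connected) :
    2 * Fintype.card V ≤ ∑ v, G.degree v + 2 := by
  have := h.card_vert_le_card_edgeSet_add_one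
  rw [Nat.card_eq_fintype_card, Nat.card_eq_fintype_card, ← edgeFinset_card] at this
  rw [sum_degrees_eq_twice_card_edges]
  omega

lemma Connected.card_filter_degree_le_one_le_two (h : G.Connected)
    (hdeg : ∀ v, G.degree v ≤ 2) :
    #{v | G.degree v ≤ 1} ≤ 2 := by
  have hle : ∑ v, (G.degree v + if G.degree v ≤ 1 then 1 else 0) ≤ ∑ _v : V, 2 :=
    sum_le_sum fun v _ => by have := hdeg v; split_ifs <;> omega
  rw [sum_add_distrib, ← card_filter, sum_const, card_univ, smul_eq_mul] at hle
  have := h.two_mul_card_le_sum_degree_add_two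
  omega

lemma ConnectedComponent.card_le_two_of_degree_le_one (hdeg : ∀ v, G.degree v ≤ 2)
    (C : G.ConnectedComponent) (s : Finset V)
    (hs : ∀ v ∈ s, v ∈ C.supp ∧ G.degree v ≤ 1) :
    #s ≤ 2 := by
  classical
  have hdegC (v : C.supp) : (G.induce C.supp).degree v = G.degree v :=
    degree_induce_of_neighborSet_subset fun _ hw => C.mem_supp_of_adj_mem_supp v.2 hw
  calc #s = #(s.subtype (· ∈ C.supp)) := by
        rw [card_subtype, filter_true_of_mem fun v hv => (hs v hv).1]
    _ ≤ #{v : C.supp | (G.induce C.supp).degree v ≤ 1} :=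
        card_le_card fun v hv => by
          rw [mem_subtype] at hv
          rw [mem_filter, hdegC]
          exact ⟨mem_univ _, (hs v hv).2⟩
    _ ≤ 2 := C.maximal_connected_induce_supp.1.card_filter_degree_le_one_le_two fun v => by
        rw [hdegC]; exact hdeg v

end SimpleGraph

lemma deg_eq_degree {n : ℕ} (G : SimpleGraph (Fin n)) [DecidableRel G.Adj] (v : Fin n) :
    deg G v = G.degree v := by
  rw [deg, ← SimpleGraph.card_neighborSet_eq_degree, ← Nat.card_eq_fintype_card]
  rfl

lemma card_filter_deg_le_one_le_two_mul_numPaths {n : ℕ} {G : SimpleGraph (Fin n)}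
    (hdeg : ∀ v, deg G v ≤ 2) : #{v | deg G v ≤ 1} ≤ 2 * numPaths G := by
  classical
  have hpath (v : Fin n) (hv : deg G v ≤ 1) : ¬ IsCycleComp G (G.connectedComponentMk v) :=
    fun h => by have := h v rfl; omega
  simp only [deg_eq_degree] at hdeg hpath ⊢
  set s : Finset (Fin n) := {v | G.degree v ≤ 1}
  calc #s ≤ 2 * #(s.image G.connectedComponentMk) :=
        card_le_mul_card_image s 2 fun C _ => C.card_le_two_of_degree_le_one hdeg _ fun v hv => by
          rw [mem_filter] at hv
          exact ⟨hv.2, (mem_filter.mp hv.1).2⟩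
    _ ≤ 2 * numPaths G := by
        rw [numPaths, ← Set.ncard_coe_finset]
        gcongr
        · exact Set.toFinite _
        · intro C hC
          obtain ⟨v, hv, rfl⟩ := mem_image.mp hC
          exact hpath v (mem_filter.mp hv).2

lemma List.card_filter_getElem {α : Type*} (a : List α) (p : α → Prop) [DecidablePred p] :
    #{i : Fin a.length | p a[i]} = (a.filter (fun x => p x)).length := by
  rw [← List.countP_eq_length_filter, card_filter]
  induction a with
  | nil => rfl
  | cons x l ih =>
    rw [List.countP_cons, ← ih]
    exact (Fin.sum_univ_succ (n := l.length) _).trans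
      (by rw [add_comm]; simp only [decide_eq_true_eq]; rfl)

section Meander

variable {a : List ℕ}

lemma psum_succ (i : Fin a.length) : psum a (i + 1) = psum a i + a[i] :=
  List.sum_take_succ a i i.2

lemma psum_mono : Monotone (psum a) := List.monotone_sum_take a

lemma eq_of_mem_block {i i' j : ℕ} (h₁ : psum a i < j) (h₂ : j ≤ psum a (i + 1))
    (h₁' : psum a i' < j) (h₂' : j ≤ psum a (i' + 1)) : i = i' := by
  by_contra hne
  rcases Nat.lt_or_gt_of_ne hne with h | h
  · have := psum_mono (a := a) (show i + 1 ≤ i' by omega); omega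
  · have := psum_mono (a := a) (show i' + 1 ≤ i by omega); omega

lemma topAdj_unique {j k k' : ℕ} (h : topAdj a j k) (h' : topAdj a j k') : k = k' := by
  obtain ⟨-, i, -, h₁, h₂, -, -, h⟩ := h
  obtain ⟨-, i', -, h₁', h₂', -, -, h'⟩ := h'
  obtain rfl := eq_of_mem_block h₁ h₂ h₁' h₂'
  omega

lemma ncard_setOf_topAdj_le_one (n j : ℕ) : {w : Fin n | topAdj a j (w + 1)}.ncard ≤ 1 :=
  (Set.ncard_le_one (Set.toFinite _)).mpr fun _ hv _ hw =>
    Fin.ext (Nat.succ_injective (topAdj_unique hv hw))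

lemma deg_meander_le_two (n : ℕ) (b : List ℕ) (v : Fin n) : deg (meander n a b) v ≤ 2 :=
  calc deg (meander n a b) v
      ≤ {w : Fin n | topAdj a (v + 1) (w + 1)}.ncard +
          {w : Fin n | topAdj b (v + 1) (w + 1)}.ncard := Set.ncard_union_le _ _
    _ ≤ 1 + 1 := add_le_add (ncard_setOf_topAdj_le_one _ _) (ncard_setOf_topAdj_le_one _ _)

/-- The centre of the `i`-th block, 0-indexed like the vertices of `meander`: `topAdj` sees it as
`blockCenter a i + 1`. -/
def blockCenter (a : List ℕ) (i : Fin a.length) : ℕ := psum a i + a[i] / 2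

lemma blockCenter_lt_psum_succ {i : Fin a.length} (hi : 0 < a[i]) :
    blockCenter a i < psum a (i + 1) := by
  rw [blockCenter, psum_succ]
  omega

lemma blockCenter_strictMonoOn :
    StrictMonoOn (blockCenter a) {i | 0 < a[i]} := fun i hi j _ hij =>
  calc blockCenter a i < psum a (i + 1) := blockCenter_lt_psum_succ hi
    _ ≤ psum a j := psum_mono (Nat.succ_le_of_lt hij)
    _ ≤ blockCenter a j := Nat.le_add_right _ _

lemma blockCenter_lt_sum {i : Fin a.length} (hi : 0 < a[i]) : blockCenter a i < a.sum :=
  calc blockCenter a i < psum a (i + 1) := blockCenter_lt_psum_succ hi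
    _ ≤ psum a a.length := psum_mono i.2
    _ = a.sum := congrArg List.sum (List.take_length)

lemma not_topAdj_blockCenter {i : Fin a.length} (hi : a[i] % 2 = 1) (k : ℕ) :
    ¬ topAdj a (blockCenter a i + 1) k := by
  rintro ⟨hne, i', -, h₁, h₂, -, -, h⟩
  have hsucc := psum_succ i
  obtain rfl : i' = i := eq_of_mem_block h₁ h₂ (by rw [blockCenter]; omega)
    (by rw [blockCenter]; omega)
  rw [blockCenter] at hne h
  omega

lemma deg_meander_blockCenter_le_one (n : ℕ) (b : List ℕ) {i : Fin a.length}
    (hi : a[i] % 2 = 1) (v : Fin n) (hv : v.1 = blockCenter a i) :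
    deg (meander n a b) v ≤ 1 :=
  calc deg (meander n a b) v ≤ {w : Fin n | topAdj b (v + 1) (w + 1)}.ncard :=
        Set.ncard_le_ncard (fun _ hw => hw.resolve_left (hv ▸ not_topAdj_blockCenter hi _))
          (Set.toFinite _)
    _ ≤ 1 := ncard_setOf_topAdj_le_one _ _

lemma length_filter_odd_le_card_deg_le_one {n : ℕ} (b : List ℕ) (hsum : a.sum = n) :
    (a.filter (fun x => x % 2 = 1)).length ≤ #{v : Fin n | deg (meander n a b) v ≤ 1} := by
  rw [← List.card_filter_getElem,
    ← card_map (s := {v | deg (meander n a b) v ≤ 1}) Fin.valEmbedding]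
  refine card_le_card_of_injOn (blockCenter a) (fun i hi => ?_) ?_
  · have hi : a[i] % 2 = 1 := (mem_filter.mp hi).2
    have hlt : blockCenter a i < n := hsum ▸ blockCenter_lt_sum (by omega)
    exact mem_map.mpr ⟨⟨_, hlt⟩, mem_filter.mpr ⟨mem_univ _,
      deg_meander_blockCenter_le_one n b hi _ rfl⟩, rfl⟩
  · exact blockCenter_strictMonoOn.injOn.mono fun i hi => by
      have : a[i] % 2 = 1 := (mem_filter.mp hi).2
      show 0 < a[i]
      omega

end Meander

theorem stmt11_general (n : ℕ) (a : List ℕ) (hsum : a.sum = n)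
    (hodd : 2 < (a.filter (fun x => x % 2 = 1)).length) :
    2 ≤ numPaths (meander n a [n]) ∧ 0 < mIndex (meander n a [n]) := by
  have hpaths : 2 ≤ numPaths (meander n a [n]) := by
    have := (length_filter_odd_le_card_deg_le_one [n] hsum).trans
      (card_filter_deg_le_one_le_two_mul_numPaths (deg_meander_le_two n [n]))
    omega
  exact ⟨hpaths, by rw [mIndex]; omega⟩

theorem stmt11 (n : ℕ) (hn : 0 < n) (a : List ℕ) (hpos : ∀ x ∈ a, 0 < x) (hsum : a.sum = n)
    (hodd : 2 < (a.filter (fun x => x % 2 = 1)).length) :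
    2 ≤ numPaths (meander n a [n]) ∧ 0 < mIndex (meander n a [n]) :=
  stmt11_general n a hsum hodd
end

section
/- For every m ≥ 0 and every 0 ≤ k ≤ m, the meander of the seaweed whose top composition is k eights followed by 2(m−k) fours followed by a single 1, over n = 8m+1, is a single path. Consequently, the number of Frobenius partitions of n = 8m+1 with all parts at most 8 is at least m+1, so this count is unbounded as m → ∞ (the periodicity phenomenon for parts bounded by d ≤ 7 fails at d = 8). -/
/-- A partition of `n` (listed in non-increasing order) is Frobenius if the meander of the
seaweed of type `l₁|…|l_m` over `n` has index `2C + P - 1 = 0`. -/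
def IsFrobeniusPartition (n : ℕ) (l : List ℕ) : Prop :=
  l.Pairwise (· ≥ ·) ∧ (∀ x ∈ l, 0 < x) ∧ l.sum = n ∧ mIndex (meander n l [n]) = 0

/-!
Number the vertices `0, …, 8m`. The final part `1` gives vertex `8m` no top arc, so its only
neighbour is `0`: a connected meander of this shape has no cycle and is a single path.

For connectivity, cut `[0, 8m)` into the windows `[8i, 8i + 8)`, each tiled by one part `8` or by
two parts `4`. The bottom arcs `x ↔ 8m - x` join window `i` to window `m - 1 - i` shifted by one,
so these two windows span a translate of one of four fixed graphs on 16 vertices (for the middle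
window of an odd `m`, of one of two graphs on 8 vertices), each of which has a Hamiltonian path.
Consecutive layers are linked by the bottom arc `8 (m - 1 - i) ↔ 8 (i + 1)`.
The `m + 1` partitions obtained are distinct, since they have different numbers of eights.
-/

open SimpleGraph

theorem SimpleGraph.reachable_of_isChain_cons {V : Type*} {G : SimpleGraph V} {u v : V}
    {l : List V} (hl : (u :: l).IsChain G.Adj) (hv : v ∈ u :: l) : G.Reachable u v := by
  induction l generalizing u with
  | nil => rw [List.mem_singleton.1 hv]
  | cons w l ih =>
    rcases List.mem_cons.1 hv with rfl | hv
    · rfl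
    · rw [List.isChain_cons_cons] at hl
      exact hl.1.reachable.trans (ih hl.2 hv)

theorem SimpleGraph.connected_of_isChain_cons {V : Type*} {G : SimpleGraph V} {u : V}
    {l : List V} (hl : (u :: l).IsChain G.Adj) (hmem : ∀ v, v ∈ u :: l) : G.Connected :=
  (connected_iff_exists_forall_reachable _).2 ⟨u, fun v => reachable_of_isChain_cons hl (hmem v)⟩

section Components

variable {n : ℕ} {G : SimpleGraph (Fin n)}

theorem not_isCycleComp_of_connected (hG : G.Connected) {v : Fin n} (hv : deg G v ≠ 2)
    (c : G.ConnectedComponent) : ¬ IsCycleComp G c := by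
  have := hG.preconnected.subsingleton_connectedComponent
  exact fun hc => hv (hc v ((c.mem_supp_iff v).2 (Subsingleton.elim _ _)))

theorem numCycles_eq_zero_of_connected (hG : G.Connected) {v : Fin n} (hv : deg G v ≠ 2) :
    numCycles G = 0 := by
  simp [numCycles, not_isCycleComp_of_connected hG hv]

theorem numPaths_eq_one_of_connected (hG : G.Connected) {v : Fin n} (hv : deg G v ≠ 2) :
    numPaths G = 1 := by
  have hall : {c : G.ConnectedComponent | ¬ IsCycleComp G c} = Set.univ :=
    Set.eq_univ_of_forall (not_isCycleComp_of_connected hG hv)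
  rw [numPaths, hall, Set.ncard_univ, Nat.card_eq_one_iff_unique]
  exact ⟨hG.preconnected.subsingleton_connectedComponent, ⟨G.connectedComponentMk v⟩⟩

theorem mIndex_eq_zero_of_connected (hG : G.Connected) {v : Fin n} (hv : deg G v ≠ 2) :
    mIndex G = 0 := by
  rw [mIndex, numCycles_eq_zero_of_connected hG hv, numPaths_eq_one_of_connected hG hv]
  rfl

end Components

theorem finite_setOf_isFrobeniusPartition (n : ℕ) : {l | IsFrobeniusPartition n l}.Finite :=
  (Set.finite_range (Composition.blocks (n := n))).subset fun l hl =>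
    ⟨⟨l, hl.2.1 _, hl.2.2.1⟩, rfl⟩

section MeanderArcs

variable {n i : ℕ} {a : List ℕ} {x y : Fin n}

theorem meander_adj_of_mem_block {b : List ℕ} (hi : i < a.length) (hx : psum a i ≤ x.1)
    (hx' : x.1 < psum a (i + 1)) (hxy : x.1 + y.1 + 1 = psum a i + psum a (i + 1))
    (hne : x ≠ y) : (meander n a b).Adj x y :=
  Or.inl ⟨fun h => hne (Fin.ext (by omega)), i, hi, by omega, by omega, by omega, by omega,
    by omega⟩

theorem meander_adj_of_add_eq (hxy : x.1 + y.1 + 1 = n) (hne : x ≠ y) :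
    (meander n a [n]).Adj x y :=
  Or.inr ⟨fun h => hne (Fin.ext (by omega)), 0, by simp, by simp [psum]; omega⟩

theorem not_topAdj_append_one (l : List ℕ) (j : ℕ) : ¬ topAdj (l ++ [1]) (l.sum + 1) j := by
  rintro ⟨hne, i, hi, hlo, hhi, hjlo, hjhi, -⟩
  rw [List.length_append, List.length_singleton, Nat.lt_succ_iff] at hi
  rcases hi.lt_or_eq with hi | rfl
  · have : psum (l ++ [1]) (i + 1) ≤ l.sum := by
      rw [psum, List.take_append_of_le_length hi]
      exact (List.take_sublist _ _).sum_le_sum fun _ _ => Nat.zero_le _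
    omega
  · simp only [psum, List.take_append_of_le_length le_rfl, List.take_length,
      List.take_of_length_le (by simp : (l ++ [1]).length ≤ l.length + 1),
      List.sum_append, List.sum_singleton] at hlo hjlo hjhi
    omega

end MeanderArcs

/-- `a` and `b` are joined by a top arc of the composition of `ℕ` into consecutive blocks of size
`s`. -/
def blockArc (s a b : ℕ) : Prop :=
  a ≠ b ∧ a / s = b / s ∧ a + b + 1 = s * (2 * (a / s) + 1)

instance (s : ℕ) : DecidableRel (blockArc s) := fun _ _ =>
  inferInstanceAs (Decidable (_ ∧ _ ∧ _))

theorem blockArc_symm {s a b : ℕ} (h : blockArc s a b) : blockArc s b a := by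
  obtain ⟨hne, hdiv, hsum⟩ := h
  exact ⟨hne.symm, hdiv.symm, by rw [← hdiv]; omega⟩

/-- Windows `i` and `m - 1 - i` of a meander of `8m + 1` vertices, a vertex `a < 8` standing for
`8i + a` and `a ≥ 8` for `8 (m - 1 - i) + a - 8`: the bottom arcs become `a ↔ 16 - a`. -/
def pairLayer (s t : ℕ) : SimpleGraph (Fin 16) where
  Adj a b := (a.1 < 8 ∧ b.1 < 8 ∧ blockArc s a b) ∨
    (8 ≤ a.1 ∧ 8 ≤ b.1 ∧ blockArc t (a.1 - 8) (b.1 - 8)) ∨ (a.1 + b.1 = 16 ∧ a ≠ b)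
  symm := ⟨fun a b h => by
    rcases h with ⟨ha, hb, h⟩ | ⟨ha, hb, h⟩ | ⟨h, hne⟩
    · exact Or.inl ⟨hb, ha, blockArc_symm h⟩
    · exact Or.inr (Or.inl ⟨hb, ha, blockArc_symm h⟩)
    · exact Or.inr (Or.inr ⟨by omega, hne.symm⟩)⟩
  loopless := ⟨fun a h => by
    rcases h with ⟨-, -, h⟩ | ⟨-, -, h⟩ | ⟨-, h⟩
    exacts [h.1 rfl, h.1 rfl, h rfl]⟩

instance (s t : ℕ) : DecidableRel (pairLayer s t).Adj := fun a b =>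
  inferInstanceAs (Decidable ((a.1 < 8 ∧ b.1 < 8 ∧ blockArc s a b) ∨
    (8 ≤ a.1 ∧ 8 ≤ b.1 ∧ blockArc t (a.1 - 8) (b.1 - 8)) ∨ (a.1 + b.1 = 16 ∧ a ≠ b)))

/-- The middle window `i` of a meander of `16i + 9` vertices: the bottom arcs become `a ↔ 8 - a`. -/
def midLayer (s : ℕ) : SimpleGraph (Fin 8) where
  Adj a b := blockArc s a b ∨ (a.1 + b.1 = 8 ∧ a ≠ b)
  symm := ⟨fun a b h => h.imp blockArc_symm fun h => ⟨by omega, h.2.symm⟩⟩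
  loopless := ⟨fun a h => h.elim (fun h => h.1 rfl) fun h => h.2 rfl⟩

instance (s : ℕ) : DecidableRel (midLayer s).Adj := fun a b =>
  inferInstanceAs (Decidable (blockArc s a b ∨ (a.1 + b.1 = 8 ∧ a ≠ b)))

theorem pairLayer_connected {s t : ℕ} (hs : s = 4 ∨ s = 8) (ht : t = 4 ∨ t = 8) :
    (pairLayer s t).Connected := by
  rcases hs with rfl | rfl <;> rcases ht with rfl | rfl
  · exact connected_of_isChain_cons (u := 0)
      (l := [3, 13, 14, 2, 1, 15, 12, 4, 7, 9, 10, 6, 5, 11, 8]) (by decide) (by decide)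
  · exact connected_of_isChain_cons (u := 0)
      (l := [3, 13, 10, 6, 5, 11, 12, 4, 7, 9, 14, 2, 1, 15, 8]) (by decide) (by decide)
  · exact connected_of_isChain_cons (u := 0)
      (l := [7, 9, 10, 6, 1, 15, 12, 4, 3, 13, 14, 2, 5, 11, 8]) (by decide) (by decide)
  · exact connected_of_isChain_cons (u := 0)
      (l := [7, 9, 14, 2, 5, 11, 12, 4, 3, 13, 10, 6, 1, 15, 8]) (by decide) (by decide)

theorem midLayer_connected {s : ℕ} (hs : s = 4 ∨ s = 8) : (midLayer s).Connected := by
  rcases hs with rfl | rfl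
  · exact connected_of_isChain_cons (u := 0) (l := [3, 5, 6, 2, 1, 7, 4]) (by decide) (by decide)
  · exact connected_of_isChain_cons (u := 0) (l := [7, 1, 6, 2, 5, 3, 4]) (by decide) (by decide)

def eightFour (m k : ℕ) : List ℕ := List.replicate k 8 ++ List.replicate (2 * (m - k)) 4 ++ [1]

def eightFourMeander (m k : ℕ) : SimpleGraph (Fin (8 * m + 1)) :=
  meander (8 * m + 1) (eightFour m k) [8 * m + 1]

/-- The size of the parts of `eightFour m k` that tile the window `[8 i, 8 i + 8)`, for `i < m`. -/
def windowPartSize (k i : ℕ) : ℕ := if i < k then 8 else 4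

theorem windowPartSize_eq (k i : ℕ) : windowPartSize k i = 4 ∨ windowPartSize k i = 8 := by
  unfold windowPartSize
  split_ifs <;> simp

section EightFour

variable {m k i : ℕ}

theorem length_eightFour : (eightFour m k).length = k + 2 * (m - k) + 1 := by
  simp only [eightFour, List.length_append, List.length_replicate, List.length_singleton]

theorem psum_eightFour_of_le (hi : i ≤ k) : psum (eightFour m k) i = 8 * i := by
  rw [psum, eightFour, List.append_assoc, List.take_append_of_le_length (by simpa using hi),
    List.take_replicate, List.sum_replicate, min_eq_left hi, smul_eq_mul, mul_comm]

theorem psum_eightFour_of_ge (hki : k ≤ i) (him : i ≤ k + 2 * (m - k)) :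
    psum (eightFour m k) i = 4 * k + 4 * i := by
  obtain ⟨t, rfl⟩ := Nat.exists_eq_add_of_le hki
  rw [psum, eightFour, List.append_assoc, List.take_append, List.length_replicate,
    Nat.add_sub_cancel_left, List.take_append_of_le_length (by simp; omega)]
  simp only [List.take_replicate, le_add_iff_nonneg_right, zero_le, inf_of_le_right,
    min_eq_left (show t ≤ 2 * (m - k) by omega), List.sum_append, List.sum_replicate, smul_eq_mul]
  ring

theorem eightFourMeander_adj_of_window {a b : ℕ} {x y : Fin (8 * m + 1)} (ha : a < 8)
    (hab : blockArc (windowPartSize k i) a b) (hx : x.1 = 8 * i + a) (hy : y.1 = 8 * i + b) :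
    (eightFourMeander m k).Adj x y := by
  obtain ⟨hne, hdiv, hsum⟩ := hab
  have hxy : x ≠ y := fun h => hne (by rw [h] at hx; omega)
  unfold windowPartSize at hdiv hsum
  split_ifs at hdiv hsum with hik
  · refine meander_adj_of_mem_block (i := i) (by rw [length_eightFour]; omega) ?_ ?_ ?_ hxy <;>
      simp only [psum_eightFour_of_le hik.le, psum_eightFour_of_le (show i + 1 ≤ k by omega)] <;>
      omega
  · set j := k + 2 * (i - k) + a / 4
    have hj := psum_eightFour_of_ge (m := m) (k := k) (i := j) (by omega) (by omega)
    have hj' := psum_eightFour_of_ge (m := m) (k := k) (i := j + 1) (by omega) (by omega)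
    refine meander_adj_of_mem_block (i := j) (by rw [length_eightFour]; omega) ?_ ?_ ?_ hxy <;>
      omega

theorem eightFourMeander_adj_of_add_eq {x y : Fin (8 * m + 1)} (hxy : x.1 + y.1 = 8 * m)
    (hne : x ≠ y) : (eightFourMeander m k).Adj x y :=
  meander_adj_of_add_eq (by omega) hne

def pairLayerHom (hi : 2 * i + 2 ≤ m) :
    pairLayer (windowPartSize k i) (windowPartSize k (m - 1 - i)) →g eightFourMeander m k where
  toFun a := ⟨if a.1 < 8 then 8 * i + a else 8 * (m - 1 - i) + (a - 8), by split_ifs <;> omega⟩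
  map_rel' {a b} h := by
    rcases h with ⟨ha, hb, h⟩ | ⟨ha, hb, h⟩ | ⟨h, hne⟩
    · exact eightFourMeander_adj_of_window ha h (by simp [ha]) (by simp [hb])
    · exact eightFourMeander_adj_of_window (by omega) h (by simp [ha]) (by simp [hb])
    · refine eightFourMeander_adj_of_add_eq (by simp only; split_ifs <;> omega) fun hab => hne ?_
      rw [Fin.ext_iff] at hab ⊢
      simp only at hab
      split_ifs at hab <;> omega

def midLayerHom (hi : 2 * i + 1 = m) : midLayer (windowPartSize k i) →g eightFourMeander m k where
  toFun a := ⟨8 * i + a, by omega⟩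
  map_rel' {a b} h := by
    rcases h with h | ⟨h, hne⟩
    · exact eightFourMeander_adj_of_window a.2 h rfl rfl
    · refine eightFourMeander_adj_of_add_eq (by simp only; omega) fun hab => hne ?_
      rw [Fin.ext_iff] at hab ⊢
      simp only at hab
      omega

theorem eightFourMeander_reachable_of_pairLayer (hi : 2 * i + 2 ≤ m) {x y : Fin (8 * m + 1)}
    (hx : x.1 = 8 * i) (hy : y.1 / 8 = i ∨ y.1 / 8 = m - 1 - i) :
    (eightFourMeander m k).Reachable x y := by
  obtain ⟨a, rfl⟩ : ∃ a, pairLayerHom (k := k) hi a = y := by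
    rcases hy with hy | hy
    · exact ⟨⟨y - 8 * i, by omega⟩, Fin.ext (by simp [pairLayerHom]; split_ifs <;> omega)⟩
    · exact ⟨⟨y - 8 * (m - 1 - i) + 8, by omega⟩, Fin.ext (by simp [pairLayerHom]; omega)⟩
  obtain rfl : pairLayerHom (k := k) hi 0 = x := Fin.ext (by simp [pairLayerHom, hx])
  have hconn := pairLayer_connected (windowPartSize_eq k i) (windowPartSize_eq k (m - 1 - i))
  exact (hconn.preconnected 0 a).map (pairLayerHom hi)

theorem eightFourMeander_reachable_of_midLayer (hi : 2 * i + 1 = m) {x y : Fin (8 * m + 1)}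
    (hx : x.1 = 8 * i) (hy : y.1 / 8 = i) : (eightFourMeander m k).Reachable x y := by
  obtain ⟨a, rfl⟩ : ∃ a, midLayerHom (k := k) hi a = y :=
    ⟨⟨y - 8 * i, by omega⟩, Fin.ext (by simp [midLayerHom]; omega)⟩
  obtain rfl : midLayerHom (k := k) hi 0 = x := Fin.ext (by simp [midLayerHom, hx])
  exact ((midLayer_connected (windowPartSize_eq k i)).preconnected 0 a).map (midLayerHom hi)

theorem eightFourMeander_reachable_window_start (hi : 2 * i ≤ m) {x : Fin (8 * m + 1)}
    (hx : x.1 = 8 * i) : (eightFourMeander m k).Reachable 0 x := by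
  induction i generalizing x with
  | zero => rw [show x = 0 from Fin.ext hx]
  | succ i ih =>
    let u : Fin (8 * m + 1) := ⟨8 * i, by omega⟩
    let w : Fin (8 * m + 1) := ⟨8 * (m - 1 - i), by omega⟩
    have huw : (eightFourMeander m k).Reachable u w :=
      eightFourMeander_reachable_of_pairLayer (by omega) rfl (Or.inr (by simp [w]))
    have hwx : (eightFourMeander m k).Reachable w x := by
      by_cases h : w = x
      · rw [h]
      · exact (eightFourMeander_adj_of_add_eq (by simp [w]; omega) h).reachable
    exact (ih (by omega) rfl).trans (huw.trans hwx)

theorem eightFourMeander_connected : (eightFourMeander m k).Connected := by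
  refine (connected_iff_exists_forall_reachable _).2 ⟨0, fun y => ?_⟩
  rcases (Nat.lt_succ_iff.1 y.2).lt_or_eq with hy | hy
  · set i := min (y.1 / 8) (m - 1 - y.1 / 8)
    have h0 : (eightFourMeander m k).Reachable 0 ⟨8 * i, by omega⟩ :=
      eightFourMeander_reachable_window_start (by omega) rfl
    by_cases hpair : 2 * i + 2 ≤ m
    · exact h0.trans (eightFourMeander_reachable_of_pairLayer hpair rfl (by omega))
    · exact h0.trans (eightFourMeander_reachable_of_midLayer (by omega) rfl (by omega))
  · rcases Nat.eq_zero_or_pos m with rfl | hm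
    · rw [show y = 0 from Fin.ext (by simp)]
    · exact (eightFourMeander_adj_of_add_eq (by simp; omega) (fun h => by
        rw [← h] at hy; simp at hy; omega)).reachable

theorem eightFourMeander_adj_last (hk : k ≤ m) {y : Fin (8 * m + 1)}
    (h : (eightFourMeander m k).Adj (Fin.last _) y) : y = 0 := by
  rcases h with h | ⟨-, i, hi, -, -, -, -, h⟩
  · have hsum : (List.replicate k 8 ++ List.replicate (2 * (m - k)) 4).sum = 8 * m := by
      simp only [List.sum_append, List.sum_replicate, smul_eq_mul]
      omega
    have := not_topAdj_append_one (List.replicate k 8 ++ List.replicate (2 * (m - k)) 4) (y + 1)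
    rw [hsum] at this
    exact absurd h this
  · obtain rfl : i = 0 := by simpa using hi
    simpa [psum] using h

theorem eightFourMeander_deg_last (hk : k ≤ m) :
    deg (eightFourMeander m k) (Fin.last _) ≠ 2 := by
  have : deg (eightFourMeander m k) (Fin.last _) ≤ ({0} : Set (Fin (8 * m + 1))).ncard :=
    Set.ncard_le_ncard (fun _ hy => eightFourMeander_adj_last hk hy) (Set.finite_singleton _)
  rw [Set.ncard_singleton] at this
  omega

theorem eightFour_isFrobeniusPartition (hk : k ≤ m) :
    IsFrobeniusPartition (8 * m + 1) (eightFour m k) := by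
  refine ⟨?_, ?_, ?_, ?_⟩
  · unfold eightFour
    grind
  · unfold eightFour
    grind
  · simp only [eightFour, List.sum_append, List.sum_replicate, smul_eq_mul, List.sum_singleton]
    omega
  · exact mIndex_eq_zero_of_connected eightFourMeander_connected (eightFourMeander_deg_last hk)

theorem count_eight_eightFour : (eightFour m k).count 8 = k := by
  simp [eightFour, List.count_replicate]

end EightFour

theorem stmt15 (m : ℕ) :
    (∀ k ≤ m,
      numCycles (meander (8 * m + 1)
        (List.replicate k 8 ++ List.replicate (2 * (m - k)) 4 ++ [1]) [8 * m + 1]) = 0 ∧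
      numPaths (meander (8 * m + 1)
        (List.replicate k 8 ++ List.replicate (2 * (m - k)) 4 ++ [1]) [8 * m + 1]) = 1 ∧
      mIndex (meander (8 * m + 1)
        (List.replicate k 8 ++ List.replicate (2 * (m - k)) 4 ++ [1]) [8 * m + 1]) = 0) ∧
    m + 1 ≤ {l : List ℕ | IsFrobeniusPartition (8 * m + 1) l ∧ ∀ x ∈ l, x ≤ 8}.ncard := by
  refine ⟨fun k hk => ?_, ?_⟩
  · have hv := eightFourMeander_deg_last hk
    exact ⟨numCycles_eq_zero_of_connected eightFourMeander_connected hv,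
      numPaths_eq_one_of_connected eightFourMeander_connected hv,
      mIndex_eq_zero_of_connected eightFourMeander_connected hv⟩
  have hinj : Function.Injective (eightFour m) := fun k k' h => by
    simpa [count_eight_eightFour] using congrArg (List.count 8) h
  have hsub : ((Finset.range (m + 1)).image (eightFour m) : Set (List ℕ)) ⊆
      {l | IsFrobeniusPartition (8 * m + 1) l ∧ ∀ x ∈ l, x ≤ 8} := by
    simp only [Finset.coe_image, Finset.coe_range, Set.image_subset_iff]
    intro k hk
    exact ⟨eightFour_isFrobeniusPartition (Nat.lt_succ_iff.1 hk), by unfold eightFour; grind⟩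
  calc m + 1 = ((Finset.range (m + 1)).image (eightFour m)).card := by
        rw [Finset.card_image_of_injective _ hinj, Finset.card_range]
    _ ≤ _ := by
      rw [← Set.ncard_coe_finset]
      exact Set.ncard_le_ncard hsub ((finite_setOf_isFrobeniusPartition _).subset fun _ h => h.1)
end

section
/- For all n ≥ 3, no partition of n with all parts equal to 1 is Frobenius; for n ≥ 5, the unique Frobenius partition of n with all parts at most 2 is (2^{(n−1)/2}, 1) when n is odd, and there are no Frobenius partitions of n with parts at most 2 when n is even. -/
/-!
A partition with parts at most 2 is `2^k 1^m`. In its meander the top arcs join `2i` and `2i+1`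
for `i < k`, and the bottom arcs join `x` and `n-1-x` (vertices counted from 0). If `m ≥ 2`, the
four end vertices `0, 1, n-2, n-1` are closed under both kinds of arcs, so the meander is
disconnected (for all parts equal to 1 already `{0, n-1}` is closed); if `m = 0` they form a
4-cycle. If `m = 1` the meander is the single path `n-1, 0, 1, n-2, n-3, 2, 3, …`, which visits
the mirror pairs `{i, n-1-i}` in the order `i = 0, 1, …, k`.
-/

namespace SimpleGraph

variable {V : Type*} {G : SimpleGraph V}

theorem Reachable.mem_of_adj_closed {S : Set V} (hS : ∀ ⦃u v⦄, u ∈ S → G.Adj u v → v ∈ S)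
    {u v : V} (h : G.Reachable u v) (hu : u ∈ S) : v ∈ S := by
  obtain ⟨p⟩ := h
  induction p with
  | nil => exact hu
  | cons hadj _ ih => exact ih (hS hu hadj)

theorem not_preconnected_of_adj_closed {S : Set V} (hS : ∀ ⦃u v⦄, u ∈ S → G.Adj u v → v ∈ S)
    {u v : V} (hu : u ∈ S) (hv : v ∉ S) : ¬G.Preconnected :=
  fun h => hv ((h u v).mem_of_adj_closed hS hu)

end SimpleGraph

open SimpleGraph

section Index

variable {n : ℕ} {G : SimpleGraph (Fin n)}

theorem numCycles_add_numPaths : numCycles G + numPaths G = Nat.card G.ConnectedComponent := by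
  rw [numCycles, numPaths, ← Set.compl_ofPred, Set.ncard_add_ncard_compl]

theorem mIndex_ne_zero_of_not_preconnected (h : ¬G.Preconnected) : mIndex G ≠ 0 := by
  obtain ⟨u, v, huv⟩ : ∃ u v, ¬G.Reachable u v := by simpa [Preconnected] using h
  have : Nontrivial G.ConnectedComponent :=
    ⟨G.connectedComponentMk u, G.connectedComponentMk v, mt ConnectedComponent.eq.mp huv⟩
  have := Finite.one_lt_card_iff_nontrivial.mpr this
  have := numCycles_add_numPaths (G := G)
  rw [mIndex]
  omega

theorem mIndex_ne_zero_of_isCycleComp {c : G.ConnectedComponent} (hc : IsCycleComp G c) :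
    mIndex G ≠ 0 := by
  have : 0 < numCycles G := (Set.ncard_pos (Set.toFinite _)).mpr ⟨c, hc⟩
  rw [mIndex]
  omega

theorem mIndex_eq_zero_of_preconnected (hG : G.Preconnected) {v : Fin n} (hv : deg G v ≠ 2) :
    mIndex G = 0 := by
  have := hG.subsingleton_connectedComponent
  have hcard : Nat.card G.ConnectedComponent = 1 :=
    Nat.card_eq_one_iff_unique.mpr ⟨this, ⟨G.connectedComponentMk v⟩⟩
  have hcycles : numCycles G = 0 := by
    rw [numCycles, Set.ncard_eq_zero, Set.eq_empty_iff_forall_notMem]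
    intro c hc
    exact hv (hc v (Subsingleton.elim (G.connectedComponentMk v) c ▸ rfl))
  have := numCycles_add_numPaths (G := G)
  rw [mIndex]
  omega

theorem deg_eq_two_of_adj_iff {v a b : Fin n} (hab : a ≠ b) (h : ∀ w, G.Adj v w ↔ w = a ∨ w = b) :
    deg G v = 2 := by
  rw [deg, ← Set.ncard_pair hab]
  congr 1
  ext w
  exact h w

theorem deg_le_one_of_adj_imp {v a : Fin n} (h : ∀ w, G.Adj v w → w = a) : deg G v ≤ 1 :=
  (Set.ncard_le_ncard (fun w hw => h w hw) (Set.finite_singleton a)).trans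
    (Set.ncard_singleton a).le

end Index

abbrev twosOnes (k m : ℕ) : List ℕ := List.replicate k 2 ++ List.replicate m 1

theorem sum_twosOnes (k m : ℕ) : (twosOnes k m).sum = 2 * k + m := by
  simp [mul_comm]

theorem psum_twosOnes (k m i : ℕ) : psum (twosOnes k m) i = min i k + min i (k + m) := by
  simp only [psum, List.take_append, List.take_replicate, List.sum_append, List.sum_replicate,
    smul_eq_mul, List.length_replicate]
  omega

theorem topAdj_twosOnes_succ (k m x y : ℕ) :
    topAdj (twosOnes k m) (x + 1) (y + 1) ↔ x ≠ y ∧ x / 2 = y / 2 ∧ x / 2 < k := by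
  constructor
  · rintro ⟨hne, i, hi, h⟩
    simp only [psum_twosOnes, List.length_append, List.length_replicate] at hi h
    omega
  · rintro ⟨hne, hxy, hk⟩
    refine ⟨by omega, x / 2, ?_⟩
    simp only [psum_twosOnes, List.length_append, List.length_replicate]
    omega

theorem topAdj_singleton_succ (n x y : ℕ) :
    topAdj [n] (x + 1) (y + 1) ↔ x ≠ y ∧ x + y + 1 = n := by
  constructor
  · rintro ⟨hne, i, hi, h⟩
    obtain rfl : i = 0 := by simpa using hi
    simp only [psum, zero_add, List.take_zero, List.take_succ_cons, List.take_nil, List.sum_nil,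
      List.sum_singleton] at h
    omega
  · rintro ⟨hne, h⟩
    refine ⟨by omega, 0, by simp, ?_⟩
    simp only [psum, zero_add, List.take_zero, List.take_succ_cons, List.take_nil, List.sum_nil,
      List.sum_singleton]
    omega

theorem meander_twosOnes_adj {n k m : ℕ} {x y : Fin n} :
    (meander n (twosOnes k m) [n]).Adj x y ↔
      x ≠ y ∧ ((x.1 / 2 = y.1 / 2 ∧ x.1 / 2 < k) ∨ x.1 + y.1 + 1 = n) := by
  change topAdj _ _ _ ∨ topAdj _ _ _ ↔ _
  rw [topAdj_twosOnes_succ, topAdj_singleton_succ, Fin.ne_iff_vne]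
  tauto

theorem meander_replicate_one_not_preconnected {n : ℕ} (hn : 3 ≤ n) :
    ¬(meander n (List.replicate n 1) [n]).Preconnected := by
  refine not_preconnected_of_adj_closed (S := {v | v.1 = 0 ∨ v.1 = n - 1}) ?_
    (u := ⟨0, by omega⟩) (v := ⟨1, by omega⟩) (by simp) (by simp; omega)
  intro u v hu huv
  change (meander n (twosOnes 0 n) [n]).Adj u v at huv
  rw [meander_twosOnes_adj] at huv
  simp only [Set.mem_ofPred_eq] at hu ⊢
  omega

theorem meander_twosOnes_not_preconnected {k m : ℕ} (hm : 2 ≤ m) (hn : 5 ≤ 2 * k + m) :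
    ¬(meander (2 * k + m) (twosOnes k m) [2 * k + m]).Preconnected := by
  refine not_preconnected_of_adj_closed
    (S := {v | v.1 = 0 ∨ v.1 = 1 ∨ v.1 + 2 = 2 * k + m ∨ v.1 + 1 = 2 * k + m}) ?_
    (u := ⟨0, by omega⟩) (v := ⟨2, by omega⟩) (by simp) (by simp; omega)
  intro u v hu huv
  rw [meander_twosOnes_adj] at huv
  simp only [Set.mem_ofPred_eq] at hu ⊢
  omega

theorem mIndex_meander_twosOnes_zero_ne_zero {k : ℕ} (hk : 2 ≤ k) :
    mIndex (meander (2 * k) (twosOnes k 0) [2 * k]) ≠ 0 := by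
  set G := meander (2 * k) (twosOnes k 0) [2 * k]
  let S : Set (Fin (2 * k)) := {v | v.1 = 0 ∨ v.1 = 1 ∨ v.1 + 2 = 2 * k ∨ v.1 + 1 = 2 * k}
  have hS : ∀ ⦃u v⦄, u ∈ S → G.Adj u v → v ∈ S := by
    intro u v hu huv
    rw [meander_twosOnes_adj] at huv
    simp only [S, Set.mem_ofPred_eq] at hu ⊢
    omega
  refine mIndex_ne_zero_of_isCycleComp (c := G.connectedComponentMk ⟨0, by omega⟩) ?_
  intro v hv
  have hvS : v ∈ S :=
    (ConnectedComponent.eq.mp hv).symm.mem_of_adj_closed hS (by simp [S])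
  simp only [S, Set.mem_ofPred_eq] at hvS
  -- the two neighbours of `v` are its partner in the top block `{2i, 2i+1}` and its mirror image
  refine deg_eq_two_of_adj_iff (a := ⟨v + 1 - 2 * (v % 2), by omega⟩)
    (b := ⟨2 * k - 1 - v, by omega⟩) (by simp [Fin.ext_iff]; omega) fun w => ?_
  rw [meander_twosOnes_adj]
  simp only [Fin.ext_iff, Fin.ne_iff_vne]
  omega

theorem meander_twosOnes_one_preconnected (k : ℕ) :
    (meander (2 * k + 1) (twosOnes k 1) [2 * k + 1]).Preconnected := by
  set G := meander (2 * k + 1) (twosOnes k 1) [2 * k + 1]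
  have adj : ∀ x y : Fin (2 * k + 1), x.1 / 2 = y.1 / 2 ∧ x.1 / 2 < k ∨ x.1 + y.1 = 2 * k →
      G.Reachable x y := by
    intro x y h
    obtain rfl | hne := eq_or_ne x y
    · rfl
    · exact (meander_twosOnes_adj.mpr ⟨hne, by omega⟩).reachable
  have pairs : ∀ i (hi : i ≤ k), G.Reachable (Fin.last _) ⟨i, by omega⟩ ∧
      G.Reachable (Fin.last _) ⟨2 * k - i, by omega⟩ := by
    intro i hi
    induction i with
    | zero =>
      exact ⟨adj _ _ (by simp), by simp [Fin.last]⟩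
    | succ i ih =>
      obtain ⟨hi₁, hi₂⟩ := ih (by omega)
      rcases Nat.mod_two_eq_zero_or_one i with hpar | hpar
      · have h := hi₁.trans (adj _ ⟨i + 1, by omega⟩ (by simp only; omega))
        exact ⟨h, h.trans (adj _ _ (by simp only; omega))⟩
      · have h := hi₂.trans (adj _ ⟨2 * k - (i + 1), by omega⟩ (by simp only; omega))
        exact ⟨h.trans (adj _ _ (by simp only; omega)), h⟩
  have hlast : ∀ x, G.Reachable (Fin.last _) x := by
    intro x
    by_cases hx : x.1 ≤ k
    · exact (pairs x hx).1
    · convert (pairs (2 * k - x) (by omega)).2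
      omega
  exact fun u v => (hlast u).symm.trans (hlast v)

theorem mIndex_meander_twosOnes_one (k : ℕ) :
    mIndex (meander (2 * k + 1) (twosOnes k 1) [2 * k + 1]) = 0 := by
  refine mIndex_eq_zero_of_preconnected (meander_twosOnes_one_preconnected k)
    (v := Fin.last _) (ne_of_lt (Nat.lt_succ_of_le (deg_le_one_of_adj_imp (a := 0) ?_)))
  intro w hw
  rw [meander_twosOnes_adj] at hw
  simp only [Fin.ext_iff, Fin.val_last, Fin.val_zero] at hw ⊢
  omega

theorem mIndex_meander_twosOnes_eq_zero_iff {k m : ℕ} (hn : 5 ≤ 2 * k + m) :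
    mIndex (meander (2 * k + m) (twosOnes k m) [2 * k + m]) = 0 ↔ m = 1 := by
  rcases (by omega : m = 0 ∨ m = 1 ∨ 2 ≤ m) with rfl | rfl | hm
  · exact iff_of_false (mIndex_meander_twosOnes_zero_ne_zero (by omega)) zero_ne_one
  · exact iff_of_true (mIndex_meander_twosOnes_one k) rfl
  · exact iff_of_false (mIndex_ne_zero_of_not_preconnected
      (meander_twosOnes_not_preconnected hm hn)) (by omega)

theorem exists_eq_twosOnes {l : List ℕ} (hl : l.Pairwise (· ≥ ·)) (hpos : ∀ x ∈ l, 0 < x)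
    (hle : ∀ x ∈ l, x ≤ 2) : ∃ k m, l = twosOnes k m := by
  induction l with
  | nil => exact ⟨0, 0, rfl⟩
  | cons a t ih =>
    simp only [List.pairwise_cons, List.mem_cons, forall_eq_or_imp] at hl hpos hle
    obtain rfl | rfl : a = 1 ∨ a = 2 := by omega
    · have ht : t = List.replicate t.length 1 :=
        List.eq_replicate_length.mpr fun b hb => by
          have := hpos.2 b hb
          have := hl.1 b hb
          omega
      exact ⟨0, t.length + 1, congrArg (List.cons 1) ht⟩
    · obtain ⟨k, m, rfl⟩ := ih hl.2 hpos.2 hle.2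
      exact ⟨k + 1, m, rfl⟩

theorem isFrobeniusPartition_and_le_two_iff {n : ℕ} (hn : 5 ≤ n) (l : List ℕ) :
    (IsFrobeniusPartition n l ∧ ∀ x ∈ l, x ≤ 2) ↔ ∃ k, 2 * k + 1 = n ∧ l = twosOnes k 1 := by
  constructor
  · rintro ⟨⟨hl, hpos, hsum, hindex⟩, hle⟩
    obtain ⟨k, m, rfl⟩ := exists_eq_twosOnes hl hpos hle
    rw [sum_twosOnes] at hsum
    subst hsum
    obtain rfl := (mIndex_meander_twosOnes_eq_zero_iff hn).mp hindex
    exact ⟨k, rfl, rfl⟩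
  · rintro ⟨k, rfl, rfl⟩
    refine ⟨⟨?_, ?_, sum_twosOnes k 1, mIndex_meander_twosOnes_one k⟩, ?_⟩ <;>
      simp [List.pairwise_append, List.pairwise_replicate] <;> omega

theorem stmt17 :
    (∀ n, 3 ≤ n → ¬ IsFrobeniusPartition n (List.replicate n 1)) ∧
    (∀ n, 5 ≤ n →
      (Odd n →
        {l : List ℕ | IsFrobeniusPartition n l ∧ ∀ x ∈ l, x ≤ 2} =
          {List.replicate ((n - 1) / 2) 2 ++ [1]}) ∧
      (Even n →
        {l : List ℕ | IsFrobeniusPartition n l ∧ ∀ x ∈ l, x ≤ 2} = ∅)) := by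
  refine ⟨fun n hn hfrob => ?_, fun n hn => ⟨fun ⟨r, hr⟩ => ?_, fun ⟨r, hr⟩ => ?_⟩⟩
  · exact mIndex_ne_zero_of_not_preconnected (meander_replicate_one_not_preconnected hn)
      hfrob.2.2.2
  · subst hr
    ext l
    rw [Set.mem_ofPred_eq, isFrobeniusPartition_and_le_two_iff hn, Set.mem_singleton_iff,
      show (2 * r + 1 - 1) / 2 = r by omega]
    constructor
    · rintro ⟨k, hk, rfl⟩
      obtain rfl : k = r := by omega
      rfl
    · rintro rfl
      exact ⟨r, rfl, rfl⟩
  · ext l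
    rw [Set.mem_ofPred_eq, isFrobeniusPartition_and_le_two_iff hn]
    simp only [Set.mem_empty_iff_false, iff_false, not_exists, not_and]
    intro k hk
    omega
end
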